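/- Let t ≥ 2 and let d = (d_0,…,d_t) be a strictly increasing tuple of integers, and fix an index i with 0 ≤ i ≤ t−2. For ℓ ∈ ℕ let d^ℓ := (d_0,…,d_{t−1}, d_t + ℓ) and let r_ℓ := β_i(π_{d^ℓ})/β_{i+1}(π_{d^ℓ}), where β_j(π_{d^ℓ}) := ∏_{0≤k≤t, k≠j} 1/|d^ℓ_j − d^ℓ_k|. Then the sequence (r_ℓ) is strictly increasing in ℓ, and for every ℓ it satisfies r_ℓ < β_i(π_e)/β_{i+1}(π_e), where e = (d_0,…,d_{t−1},∞) and β_j(π_e) := ∏_{0≤k≤t−1, k≠j} 1/|d_j − d_k|. -/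

import Mathlib

open Finset

/-!
Raising the last degree `d_t` to `x = d_t + ℓ` changes `β_j` (for `j < t`) only through the new
factor `1/|d_j - x|`, so `r_ℓ = (β_i(π_e) / β_{i+1}(π_e)) · (x - d_{i+1}) / (x - d_i)`.
For `d_i < d_{i+1} < x` the Möbius factor `(x - d_{i+1}) / (x - d_i) = 1 - (d_{i+1} - d_i) / (x - d_i)`
increases strictly with `x` and stays below `1`.
-/

/-- The degree sequence `d^ℓ = (d_0, …, d_{t−1}, d_t + ℓ)` obtained from `d` by pushing
the last entry up by `ℓ`. -/
def dSeq {t : ℕ} (d : Fin (t + 1) → ℤ) (ℓ : ℕ) : Fin (t + 1) → ℤ :=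
  fun k => if (k : ℕ) = t then d k + (ℓ : ℤ) else d k

/-- The `j`-th Betti number of the pure diagram of the full degree sequence
`(d_0, …, d_t)`: the product over all `k ≠ j` of `1/|d_j − d_k|`. -/
def bettiFull {t : ℕ} (d : Fin (t + 1) → ℤ) (j : Fin (t + 1)) : ℚ :=
  ∏ k ∈ Finset.univ.filter (fun k => k ≠ j), (1 : ℚ) / |((d j : ℚ) - (d k : ℚ))|

/-- The `j`-th Betti number of the pure diagram of the truncated degree sequence
`(d_0, …, d_{t−1}, ∞)`: the product over all `k ≠ j` with `k ≤ t − 1` of `1/|d_j − d_k|`. -/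
def bettiTrunc {t : ℕ} (d : Fin (t + 1) → ℤ) (j : Fin (t + 1)) : ℚ :=
  ∏ k ∈ Finset.univ.filter (fun k => k ≠ j ∧ (k : ℕ) < t),
    (1 : ℚ) / |((d j : ℚ) - (d k : ℚ))|

section SubDivSub

variable {K : Type*} [Field K] [LinearOrder K] [IsStrictOrderedRing K] {a b : K}

lemma strictMonoOn_sub_div_sub (hab : a < b) :
    StrictMonoOn (fun x => (x - b) / (x - a)) (Set.Ioi a) := by
  intro x hx y hy hxy
  simp only [Set.mem_Ioi] at hx hy
  rw [div_lt_div_iff₀ (sub_pos.2 hx) (sub_pos.2 hy)]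
  nlinarith

lemma sub_div_sub_lt_one (hab : a < b) {x : K} (hx : a < x) : (x - b) / (x - a) < 1 := by
  rw [div_lt_one (sub_pos.2 hx)]
  linarith

end SubDivSub

section Betti

variable {t : ℕ} {d : Fin (t + 1) → ℤ}

lemma strictMono_of_add_one_le
    (hd : ∀ j : ℕ, (hj : j + 1 ≤ t) →
      d ⟨j, Nat.lt_succ_of_le (Nat.le_of_succ_le hj)⟩ + 1 ≤ d ⟨j + 1, Nat.lt_succ_of_le hj⟩) :
    StrictMono d :=
  Fin.strictMono_iff_lt_succ.2 fun k => Int.lt_iff_add_one_le.2 (hd k k.isLt)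

lemma bettiTrunc_pos (hd : Function.Injective d) (j : Fin (t + 1)) : 0 < bettiTrunc d j :=
  prod_pos fun _ hk => one_div_pos.2 <| abs_pos.2 <| sub_ne_zero.2 <| by
    exact_mod_cast hd.ne (mem_filter.1 hk).2.1.symm

@[simp]
lemma dSeq_of_lt (ℓ : ℕ) {k : Fin (t + 1)} (hk : (k : ℕ) < t) : dSeq d ℓ k = d k :=
  if_neg hk.ne

@[simp]
lemma dSeq_last (ℓ : ℕ) : dSeq d ℓ (Fin.last t) = d (Fin.last t) + ℓ :=
  if_pos rfl

lemma bettiFull_dSeq (ℓ : ℕ) {j : Fin (t + 1)} (hj : (j : ℕ) < t) :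
    bettiFull (dSeq d ℓ) j =
      bettiTrunc d j / |(d j : ℚ) - ((d (Fin.last t) : ℚ) + ℓ)| := by
  have hsplit : univ.filter (· ≠ j) =
      insert (Fin.last t) (univ.filter fun k : Fin (t + 1) => k ≠ j ∧ (k : ℕ) < t) := by
    ext k
    simp only [mem_filter, mem_insert, mem_univ, true_and, Ne, ← Fin.val_eq_val, Fin.val_last]
    omega
  have hlast : Fin.last t ∉ univ.filter fun k : Fin (t + 1) => k ≠ j ∧ (k : ℕ) < t := by simp
  rw [bettiFull, hsplit, prod_insert hlast, mul_comm, bettiTrunc, dSeq_of_lt ℓ hj, dSeq_last,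
    mul_one_div]
  congr 1
  · exact prod_congr rfl fun k hk => by rw [dSeq_of_lt ℓ (mem_filter.1 hk).2.2]
  · push_cast
    rfl

lemma bettiFull_dSeq_div_bettiFull_dSeq (hd : StrictMono d) (ℓ : ℕ) {i j : Fin (t + 1)}
    (hi : (i : ℕ) < t) (hj : (j : ℕ) < t) :
    bettiFull (dSeq d ℓ) i / bettiFull (dSeq d ℓ) j =
      bettiTrunc d i / bettiTrunc d j *
        (((d (Fin.last t) : ℚ) + ℓ - d j) / ((d (Fin.last t) : ℚ) + ℓ - d i)) := by
  have hgap : ∀ k : Fin (t + 1), (k : ℕ) < t → 0 < (d (Fin.last t) : ℚ) + ℓ - d k := by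
    intro k hk
    have : (d k : ℚ) < d (Fin.last t) := by exact_mod_cast hd (Fin.mk_lt_mk.2 hk)
    linarith [(Nat.cast_nonneg ℓ : (0 : ℚ) ≤ ℓ)]
  rw [bettiFull_dSeq ℓ hi, bettiFull_dSeq ℓ hj, abs_sub_comm, abs_of_pos (hgap i hi),
    abs_sub_comm, abs_of_pos (hgap j hj)]
  field_simp [(hgap i hi).ne', (hgap j hj).ne']

end Betti

/-- For a strictly increasing integer tuple `d = (d_0, …, d_t)` with `t ≥ 2` and
`0 ≤ i ≤ t − 2`, the ratios `r_ℓ = β_i(π_{d^ℓ})/β_{i+1}(π_{d^ℓ})`, where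
`d^ℓ = (d_0,…,d_{t−1},d_t+ℓ)`, form a strictly increasing sequence in `ℓ`, bounded
above by the corresponding ratio for the degree sequence `e = (d_0,…,d_{t−1},∞)`. -/
theorem ratios_strictMono_lt_truncation {t : ℕ}
    (d : Fin (t + 1) → ℤ)
    (hd : ∀ j : ℕ, (hj : j + 1 ≤ t) → d ⟨j, by omega⟩ + 1 ≤ d ⟨j + 1, by omega⟩)
    (i : ℕ) (hi : i + 2 ≤ t) :
    StrictMono (fun ℓ : ℕ =>
        bettiFull (dSeq d ℓ) ⟨i, by omega⟩ / bettiFull (dSeq d ℓ) ⟨i + 1, by omega⟩) ∧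
    ∀ ℓ : ℕ,
      bettiFull (dSeq d ℓ) ⟨i, by omega⟩ / bettiFull (dSeq d ℓ) ⟨i + 1, by omega⟩ <
        bettiTrunc d ⟨i, by omega⟩ / bettiTrunc d ⟨i + 1, by omega⟩ := by
  have hmono := strictMono_of_add_one_le hd
  have hp : i < t := by omega
  have hq : i + 1 < t := by omega
  set p : Fin (t + 1) := ⟨i, hp.trans t.lt_succ_self⟩
  set q : Fin (t + 1) := ⟨i + 1, hq.trans t.lt_succ_self⟩
  have hpq : (d p : ℚ) < d q := by exact_mod_cast hmono (Fin.mk_lt_mk.2 i.lt_succ_self)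
  have hmem : ∀ ℓ : ℕ, (d (Fin.last t) : ℚ) + ℓ ∈ Set.Ioi (d p : ℚ) := by
    have hlast : (d p : ℚ) < d (Fin.last t) := by exact_mod_cast hmono hp
    exact fun ℓ => lt_add_of_lt_of_nonneg hlast ℓ.cast_nonneg
  have hpos := div_pos (bettiTrunc_pos hmono.injective p) (bettiTrunc_pos hmono.injective q)
  simp only [bettiFull_dSeq_div_bettiFull_dSeq hmono _ (i := p) (j := q) hp hq]
  refine ⟨fun m n hmn => mul_lt_mul_of_pos_left ?_ hpos,
    fun ℓ => mul_lt_of_lt_one_right hpos (sub_div_sub_lt_one hpq (hmem ℓ))⟩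
  exact strictMonoOn_sub_div_sub hpq (hmem m) (hmem n) (by simpa using hmn)
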